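/- For λ > 0, the skew normal cdf satisfies F(z) ~ (1/(πλ(1+λ²))) |z|^{-2} e^{-(1+λ²)z²/2} as z → -∞. -/

import Mathlib

/-!
Both `F = skewNormalCdf λ` and the claimed equivalent `G` tend to `0` at `-∞`, so by L'Hôpital's
rule it suffices to compare derivatives. Since `φ(z) φ(λz) = e^{-(1+λ²)z²/2} / (2π)`, the derivative
of `G` is `2 φ(z) · φ(λz)/(-λz) · (1 + 2/((1+λ²)z²))`, while `F' = 2 φ(z) Φ(λz)`. Their ratio tends
to `1` by Mills' ratio `Φ(y) ~ φ(y)/|y|` as `y → -∞`, which is itself a second application of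
L'Hôpital's rule.
-/

open Real MeasureTheory Filter Set

noncomputable def stdNormalPdf (t : ℝ) : ℝ := (Real.sqrt (2 * π))⁻¹ * Real.exp (-t ^ 2 / 2)

noncomputable def stdNormalCdf (z : ℝ) : ℝ := ∫ t in Set.Iic z, stdNormalPdf t

noncomputable def skewNormalCdf (l z : ℝ) : ℝ :=
  ∫ t in Set.Iic z, 2 * stdNormalPdf t * stdNormalCdf (l * t)

open ProbabilityTheory Topology

theorem hasDerivAt_integral_Iic {E : Type*} [NormedAddCommGroup E] [NormedSpace ℝ E]
    [CompleteSpace E] {f : ℝ → E} (hf : Integrable f) (hc : Continuous f) (z : ℝ) :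
    HasDerivAt (fun x => ∫ t in Iic x, f t) (f z) z := by
  have hsplit :
      (fun x => ∫ t in Iic x, f t) = fun x => (∫ t in Iic 0, f t) + ∫ t in 0..x, f t := by
    funext x
    rw [← intervalIntegral.integral_Iic_sub_Iic hf.integrableOn hf.integrableOn, add_sub_cancel]
  rw [hsplit]
  exact (intervalIntegral.integral_hasDerivAt_right (hc.intervalIntegrable _ _)
    (hc.stronglyMeasurableAtFilter _ _) hc.continuousAt).const_add _

theorem tendsto_sq_atBot_atTop : Tendsto (fun z : ℝ => z ^ 2) atBot atTop :=
  ((tendsto_pow_atTop two_ne_zero).comp tendsto_neg_atBot_atTop).congr fun z => by simp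

theorem stdNormalPdf_eq_gaussianPDFReal : stdNormalPdf = gaussianPDFReal 0 1 := by
  funext t
  simp [stdNormalPdf, gaussianPDFReal]

theorem stdNormalPdf_pos (t : ℝ) : 0 < stdNormalPdf t := by
  unfold stdNormalPdf
  positivity

theorem continuous_stdNormalPdf : Continuous stdNormalPdf := by
  unfold stdNormalPdf
  fun_prop

theorem integrable_stdNormalPdf : Integrable stdNormalPdf :=
  stdNormalPdf_eq_gaussianPDFReal ▸ integrable_gaussianPDFReal 0 1

theorem integral_stdNormalPdf : ∫ t, stdNormalPdf t = 1 :=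
  stdNormalPdf_eq_gaussianPDFReal ▸ integral_gaussianPDFReal_eq_one 0 one_ne_zero

theorem hasDerivAt_stdNormalPdf (y : ℝ) : HasDerivAt stdNormalPdf (-y * stdNormalPdf y) y := by
  have hexp : HasDerivAt (fun y : ℝ => exp (-y ^ 2 / 2)) (exp (-y ^ 2 / 2) * -y) y := by
    convert ((hasDerivAt_pow 2 y).fun_neg.div_const 2).exp using 1
    ring
  unfold stdNormalPdf
  exact (hexp.const_mul _).congr_deriv (by ring)

theorem tendsto_stdNormalPdf_atBot : Tendsto stdNormalPdf atBot (𝓝 0) := by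
  have hexp : Tendsto (fun y : ℝ => exp (-y ^ 2 / 2)) atBot (𝓝 0) :=
    tendsto_exp_atBot.comp
      ((tendsto_neg_atTop_atBot.comp tendsto_sq_atBot_atTop).atBot_div_const two_pos)
  have h := hexp.const_mul (√(2 * π))⁻¹
  rw [mul_zero] at h
  exact h

theorem stdNormalPdf_mul_stdNormalPdf_mul (l x : ℝ) :
    stdNormalPdf x * stdNormalPdf (l * x) = (2 * π)⁻¹ * exp (-(1 + l ^ 2) * x ^ 2 / 2) := by
  unfold stdNormalPdf
  rw [mul_mul_mul_comm, ← mul_inv, Real.mul_self_sqrt (by positivity), ← exp_add]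
  ring_nf

theorem hasDerivAt_stdNormalCdf (z : ℝ) : HasDerivAt stdNormalCdf (stdNormalPdf z) z :=
  hasDerivAt_integral_Iic integrable_stdNormalPdf continuous_stdNormalPdf z

theorem continuous_stdNormalCdf : Continuous stdNormalCdf :=
  continuous_iff_continuousAt.2 fun z => (hasDerivAt_stdNormalCdf z).continuousAt

theorem tendsto_stdNormalCdf_atBot : Tendsto stdNormalCdf atBot (𝓝 0) :=
  tendsto_integral_Iic_zero tendsto_id

theorem stdNormalCdf_nonneg (z : ℝ) : 0 ≤ stdNormalCdf z :=
  setIntegral_nonneg measurableSet_Iic fun t _ => (stdNormalPdf_pos t).le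

theorem stdNormalCdf_le_one (z : ℝ) : stdNormalCdf z ≤ 1 :=
  integral_stdNormalPdf ▸ setIntegral_le_integral integrable_stdNormalPdf
    (Eventually.of_forall fun t => (stdNormalPdf_pos t).le)

theorem hasDerivAt_stdNormalPdf_div_neg {y : ℝ} (hy : y ≠ 0) :
    HasDerivAt (fun y => stdNormalPdf y / -y) (stdNormalPdf y * (1 + (y ^ 2)⁻¹)) y := by
  refine ((hasDerivAt_stdNormalPdf y).div (hasDerivAt_id y).neg (neg_ne_zero.2 hy)).congr_deriv
    ?_
  simp only [Pi.neg_apply, id]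
  field_simp
  ring

theorem tendsto_stdNormalCdf_div_stdNormalPdf_div_neg_atBot :
    Tendsto (fun y => stdNormalCdf y / (stdNormalPdf y / -y)) atBot (𝓝 1) := by
  have hpdf : Tendsto (fun y => stdNormalPdf y / -y) atBot (𝓝 0) := by
    simpa [div_eq_mul_inv] using
      tendsto_stdNormalPdf_atBot.mul (tendsto_inv_atTop_zero.comp tendsto_neg_atBot_atTop)
  have hderiv : Tendsto (fun y : ℝ => stdNormalPdf y / (stdNormalPdf y * (1 + (y ^ 2)⁻¹)))
      atBot (𝓝 1) := by
    have h := ((tendsto_inv_atTop_zero.comp tendsto_sq_atBot_atTop).const_add 1).inv₀ (by norm_num)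
    simp only [add_zero, inv_one] at h
    refine h.congr fun y => ?_
    rw [div_mul_cancel_left₀ (stdNormalPdf_pos y).ne']
    rfl
  exact HasDerivAt.lhopital_zero_atBot_on_Iio (a := 0)
    (fun y _ => hasDerivAt_stdNormalCdf y) (fun y hy => hasDerivAt_stdNormalPdf_div_neg hy.ne)
    (fun y _ => (mul_pos (stdNormalPdf_pos y) (by positivity)).ne')
    tendsto_stdNormalCdf_atBot hpdf hderiv

noncomputable def skewNormalPdf (l t : ℝ) : ℝ := 2 * stdNormalPdf t * stdNormalCdf (l * t)

theorem continuous_skewNormalPdf (l : ℝ) : Continuous (skewNormalPdf l) := by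
  unfold skewNormalPdf
  have := continuous_stdNormalPdf
  have := continuous_stdNormalCdf
  fun_prop

theorem integrable_skewNormalPdf (l : ℝ) : Integrable (skewNormalPdf l) := by
  refine (integrable_stdNormalPdf.const_mul 2).mono'
    (continuous_skewNormalPdf l).aestronglyMeasurable (Eventually.of_forall fun t => ?_)
  have hpdf := stdNormalPdf_pos t
  rw [Real.norm_of_nonneg (by unfold skewNormalPdf; positivity [stdNormalCdf_nonneg (l * t)])]
  calc skewNormalPdf l t ≤ 2 * stdNormalPdf t * 1 := by
        unfold skewNormalPdf; gcongr; exact stdNormalCdf_le_one _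
    _ = 2 * stdNormalPdf t := mul_one _

theorem hasDerivAt_skewNormalCdf (l z : ℝ) :
    HasDerivAt (skewNormalCdf l) (skewNormalPdf l z) z :=
  hasDerivAt_integral_Iic (integrable_skewNormalPdf l) (continuous_skewNormalPdf l) z

theorem tendsto_skewNormalCdf_atBot (l : ℝ) : Tendsto (skewNormalCdf l) atBot (𝓝 0) :=
  tendsto_integral_Iic_zero tendsto_id

noncomputable def skewNormalTailApprox (l z : ℝ) : ℝ :=
  1 / (π * l * (1 + l ^ 2)) * (z ^ 2)⁻¹ * exp (-(1 + l ^ 2) * z ^ 2 / 2)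

theorem tendsto_skewNormalTailApprox_atBot (l : ℝ) :
    Tendsto (skewNormalTailApprox l) atBot (𝓝 0) := by
  have hquad : Tendsto (fun z : ℝ => -(1 + l ^ 2) * z ^ 2 / 2) atBot atBot :=
    ((tendsto_neg_atTop_atBot.comp (tendsto_sq_atBot_atTop.const_mul_atTop
      (by positivity : (0 : ℝ) < 1 + l ^ 2))).atBot_div_const two_pos).congr fun z => by
        simp only [Function.comp_apply, neg_mul]
  have hexp := tendsto_exp_atBot.comp hquad
  have h := ((tendsto_inv_atTop_zero.comp tendsto_sq_atBot_atTop).const_mul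
    (1 / (π * l * (1 + l ^ 2)))).mul hexp
  rw [mul_zero] at h
  exact h

theorem hasDerivAt_skewNormalTailApprox {l z : ℝ} (hl : l ≠ 0) (hz : z ≠ 0) :
    HasDerivAt (skewNormalTailApprox l)
      (2 * stdNormalPdf z * (stdNormalPdf (l * z) / -(l * z)) * (1 + 2 / ((1 + l ^ 2) * z ^ 2)))
      z := by
  have hinv : HasDerivAt (fun z : ℝ => (z ^ 2)⁻¹) (-(2 * z) / (z ^ 2) ^ 2) z := by
    refine ((hasDerivAt_pow 2 z).fun_inv (pow_ne_zero 2 hz)).congr_deriv ?_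
    norm_num
  have hexp : HasDerivAt (fun z : ℝ => exp (-(1 + l ^ 2) * z ^ 2 / 2))
      (exp (-(1 + l ^ 2) * z ^ 2 / 2) * (-(1 + l ^ 2) * z)) z := by
    convert (((hasDerivAt_pow 2 z).const_mul (-(1 + l ^ 2))).div_const 2).exp using 1
    ring
  refine ((hinv.const_mul _).mul hexp).congr_deriv ?_
  rw [show 2 * stdNormalPdf z * (stdNormalPdf (l * z) / -(l * z)) =
      2 * (stdNormalPdf z * stdNormalPdf (l * z)) / -(l * z) by ring,
    stdNormalPdf_mul_stdNormalPdf_mul]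
  field_simp
  ring

theorem tendsto_skewNormalPdf_div_deriv_skewNormalTailApprox {l : ℝ} (hl : 0 < l) :
    Tendsto (fun z => skewNormalPdf l z /
      (2 * stdNormalPdf z * (stdNormalPdf (l * z) / -(l * z)) * (1 + 2 / ((1 + l ^ 2) * z ^ 2))))
      atBot (𝓝 1) := by
  have hmills := tendsto_stdNormalCdf_div_stdNormalPdf_div_neg_atBot.comp
    (tendsto_id.const_mul_atBot hl)
  have hcorr : Tendsto (fun z : ℝ => 1 + 2 / ((1 + l ^ 2) * z ^ 2)) atBot (𝓝 1) := by
    have h := ((tendsto_inv_atTop_zero.comp tendsto_sq_atBot_atTop).const_mul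
      (2 / (1 + l ^ 2))).const_add 1
    rw [mul_zero, add_zero] at h
    refine h.congr fun z => ?_
    simp only [Function.comp_apply, div_eq_mul_inv, mul_inv]
    ring
  have h := hmills.div hcorr one_ne_zero
  rw [div_one] at h
  refine h.congr fun z => ?_
  have hpdf : 2 * stdNormalPdf z ≠ 0 := by have := stdNormalPdf_pos z; positivity
  simp only [Pi.div_apply, Function.comp_apply, id, skewNormalPdf]
  rw [mul_assoc (2 * stdNormalPdf z), mul_div_mul_left _ _ hpdf, div_div]

/-- For l > 0, F(z) ~ (1/(π l (1+l²))) |z|⁻² e^{-(1+l²)z²/2} as z → -∞. -/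
theorem skewNormalCdf_tail_equiv_pos (l : ℝ) (hl : 0 < l) :
    Tendsto (fun z : ℝ =>
      skewNormalCdf l z /
        ((1 / (π * l * (1 + l ^ 2))) * |z| ^ (-2 : ℤ) * Real.exp (-(1 + l ^ 2) * z ^ 2 / 2)))
      atBot (nhds 1) := by
  have habs (z : ℝ) : |z| ^ (-2 : ℤ) = (z ^ 2)⁻¹ := by
    rw [zpow_neg, zpow_two, abs_mul_abs_self, sq]
  simp only [habs]
  refine HasDerivAt.lhopital_zero_atBot_on_Iio (a := 0) (g := skewNormalTailApprox l)
    (fun z _ => hasDerivAt_skewNormalCdf l z)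
    (fun z hz => hasDerivAt_skewNormalTailApprox hl.ne' hz.ne) (fun z hz => ?_)
    (tendsto_skewNormalCdf_atBot l) (tendsto_skewNormalTailApprox_atBot l)
    (tendsto_skewNormalPdf_div_deriv_skewNormalTailApprox hl)
  have hlz : 0 < -(l * z) := neg_pos.2 (mul_neg_of_pos_of_neg hl hz)
  have := stdNormalPdf_pos z
  have := stdNormalPdf_pos (l * z)
  positivity
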